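/- Let P be a copositive 2×2 matrix whose copositive minimizers are exactly the three vectors (a,b), (c,d), (a+c, b+d) with ad − bc = ±1. Then the rank-one matrices (a,b)(a,b)^T, (c,d)(c,d)^T, (a+c,b+d)(a+c,b+d)^T form a Hilbert basis of the cone they generate: every integral 2×2 symmetric matrix in this cone is a nonnegative integral combination of these three matrices. -/
import Mathlib


open Matrix

/-- The quadratic form `B[x] = xᵀ B x`. -/
def quadForm {n : ℕ} (B : Matrix (Fin n) (Fin n) ℝ) (x : Fin n → ℝ) : ℝ :=
  x ⬝ᵥ B.mulVec x

/-- The copositive minimum. -/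
noncomputable def copositiveMin {n : ℕ} (B : Matrix (Fin n) (Fin n) ℝ) : ℝ :=
  sInf {t : ℝ | ∃ v : Fin n → ℤ, (∀ i, 0 ≤ v i) ∧ v ≠ 0 ∧
    t = quadForm B (fun i => (v i : ℝ))}

/-- The set of minimizers of the copositive minimum. -/
def copositiveMinSet {n : ℕ} (B : Matrix (Fin n) (Fin n) ℝ) : Set (Fin n → ℤ) :=
  {v | (∀ i, 0 ≤ v i) ∧ v ≠ 0 ∧ quadForm B (fun i => (v i : ℝ)) = copositiveMin B}

theorem hilbert_basis_two_by_two
    (a b c d : ℤ) (hdet : a * d - b * c = 1 ∨ a * d - b * c = -1)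
    (P : Matrix (Fin 2) (Fin 2) ℝ) (hPsymm : P.IsSymm)
    (hPcop : ∀ x : Fin 2 → ℝ, (∀ i, 0 ≤ x i) → 0 ≤ quadForm P x)
    (hMin : copositiveMinSet P = {![a, b], ![c, d], ![a + c, b + d]}) :
    ∀ A : Matrix (Fin 2) (Fin 2) ℤ, A.IsSymm →
      (∃ α β γ : ℝ, 0 ≤ α ∧ 0 ≤ β ∧ 0 ≤ γ ∧
        A.map (Int.cast : ℤ → ℝ) =
          α • (vecMulVec (![a, b]) (![a, b])).map (Int.cast : ℤ → ℝ) +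
          β • (vecMulVec (![c, d]) (![c, d])).map (Int.cast : ℤ → ℝ) +
          γ • (vecMulVec (![a + c, b + d]) (![a + c, b + d])).map (Int.cast : ℤ → ℝ)) →
      ∃ p q r : ℕ,
        A = (p : ℤ) • vecMulVec (![a, b]) (![a, b]) +
            (q : ℤ) • vecMulVec (![c, d]) (![c, d]) +
            (r : ℤ) • vecMulVec (![a + c, b + d]) (![a + c, b + d]) := by

  intro A hA ⟨α, β, γ, hα, hβ, hγ, heq⟩
  have hI : (a * d - b * c) ^ 2 = 1 := by rcases hdet with h | h <;> rw [h] <;> ring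
  have hsym : A 1 0 = A 0 1 := by
    have := congrFun (congrFun hA 1) 0
    simpa [Matrix.transpose_apply] using this.symm
  have entry : ∀ i j : Fin 2, (A i j : ℝ) =
      α * ((![a, b] i : ℤ) : ℝ) * ((![a, b] j : ℤ) : ℝ) +
      β * ((![c, d] i : ℤ) : ℝ) * ((![c, d] j : ℤ) : ℝ) +
      γ * ((![a + c, b + d] i : ℤ) : ℝ) * ((![a + c, b + d] j : ℤ) : ℝ) := by
    intro i j
    have := congrFun (congrFun heq i) j
    simp only [Matrix.add_apply, Matrix.smul_apply, Matrix.map_apply, vecMulVec_apply,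
      smul_eq_mul, Int.cast_mul] at this
    linarith [this]
  have h00 := entry 0 0
  have h01 := entry 0 1
  have h11 := entry 1 1
  simp only [Matrix.cons_val_zero, Matrix.cons_val_one, Matrix.head_cons] at h00 h01 h11
  push_cast at h00 h01 h11
  have hD : ((a : ℝ) * d - b * c) ^ 2 = 1 := by exact_mod_cast hI
  set g : ℤ := -(b * d) * A 0 0 + (a * d + b * c) * A 0 1 + -(a * c) * A 1 1 with hg_def
  set α₀ : ℤ := d ^ 2 * A 0 0 - 2 * c * d * A 0 1 + c ^ 2 * A 1 1 - g with ha_def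
  set β₀ : ℤ := b ^ 2 * A 0 0 - 2 * a * b * A 0 1 + a ^ 2 * A 1 1 - g with hb_def
  have hgr : (g : ℝ) = γ := by
    rw [hg_def]
    push_cast
    linear_combination (-(b : ℝ) * d) * h00 + ((a : ℝ) * d + (b : ℝ) * c) * h01 +
      (-(a : ℝ) * c) * h11 + γ * hD
  have har : (α₀ : ℝ) = α := by
    rw [ha_def]
    push_cast
    linear_combination (d : ℝ) ^ 2 * h00 - 2 * (c : ℝ) * d * h01 + (c : ℝ) ^ 2 * h11 - hgr +
      (α + γ) * hD
  have hbr : (β₀ : ℝ) = β := by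
    rw [hb_def]
    push_cast
    linear_combination (b : ℝ) ^ 2 * h00 - 2 * (a : ℝ) * b * h01 + (a : ℝ) ^ 2 * h11 - hgr +
      (β + γ) * hD
  have hg0 : 0 ≤ g := by
    have : (0 : ℝ) ≤ (g : ℝ) := by rw [hgr]; exact hγ
    exact_mod_cast this
  have ha0 : 0 ≤ α₀ := by
    have : (0 : ℝ) ≤ (α₀ : ℝ) := by rw [har]; exact hα
    exact_mod_cast this
  have hb0 : 0 ≤ β₀ := by
    have : (0 : ℝ) ≤ (β₀ : ℝ) := by rw [hbr]; exact hβ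
    exact_mod_cast this
  refine ⟨α₀.toNat, β₀.toNat, g.toNat, ?_⟩
  ext i j
  simp only [Matrix.add_apply, Matrix.smul_apply, vecMulVec_apply, smul_eq_mul,
    Int.toNat_of_nonneg ha0, Int.toNat_of_nonneg hb0, Int.toNat_of_nonneg hg0]
  rw [ha_def, hb_def, hg_def]
  fin_cases i <;> fin_cases j <;>
    simp only [Fin.mk_zero, Fin.mk_one, Matrix.cons_val_zero, Matrix.cons_val_one,
      Matrix.head_cons] <;>
  [ (linear_combination (-(A 0 0)) * hI);
    (linear_combination (-(A 0 1)) * hI);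
    (linear_combination hsym + (-(A 0 1)) * hI);
    (linear_combination (-(A 1 1)) * hI) ]
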